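/- Let q > 0, let a < b be real numbers with d(a,b;q^i) ≠ 0 for i = 0,…,n−1, let b_0,…,b_n be points in ℝ^d, and let P(x) = Σ_{k=0}^{n} b_k·B^n_k(x;q) be the associated quantum trigonometric Bézier curve. Let b̃^r_k(x) and b̄^r_k(x) be defined by the recursions b̃^0_k(x) = b̄^0_k(x) = b_k, b̃^{r+1}_k(x) = q^k·(d(x,b;q^{n−r−k−1})/d(a,b;q^{n−r−1}))·b̃^r_k(x) + (d(a,x;q^k)/d(a,b;q^{n−r−1}))·b̃^r_{k+1}(x), and b̄^{r+1}_k(x) = (d(x,b;q^{n−r−k−1})/d(a,b;q^{n−r−1}))·b̄^r_k(x) + q^{n−r−k−1}·(d(a,x;q^k)/d(a,b;q^{n−r−1}))·b̄^r_{k+1}(x), for r = 0,…,n−1 and k = 0,…,n−r−1. Then b̃^n_0(x) = b̄^n_0(x) = P(x) for every real x. -/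

import Mathlib

/-- `d(x,y;c) = ((c+1)/2)·sin(y−x) + ((c−1)/2)·sin(y+x)`. -/
noncomputable def dq (x y c : ℝ) : ℝ :=
  (c + 1) / 2 * Real.sin (y - x) + (c - 1) / 2 * Real.sin (y + x)

/-- The q-integer `[k]_q = 1 + q + ⋯ + q^{k−1}`. -/
noncomputable def qInt (q : ℝ) (k : ℕ) : ℝ := ∑ i ∈ Finset.range k, q ^ i

/-- The q-factorial `[k]_q!`. -/
noncomputable def qFact (q : ℝ) : ℕ → ℝ
  | 0 => 1
  | k + 1 => qInt q (k + 1) * qFact q k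

/-- The q-binomial coefficient `[n choose k]_q`. -/
noncomputable def qBinom (q : ℝ) (n k : ℕ) : ℝ :=
  qFact q n / (qFact q k * qFact q (n - k))

/-- Quantum trigonometric Bernstein basis function `B^n_k(x;q)` on `[a,b]`. -/
noncomputable def qBern (q a b : ℝ) (n k : ℕ) (x : ℝ) : ℝ :=
  qBinom q n k *
    ((∏ i ∈ Finset.range k, dq a x (q ^ i)) * ∏ i ∈ Finset.range (n - k), dq x b (q ^ i)) /
    ∏ i ∈ Finset.range n, dq a b (q ^ i)

/-- A matrix is totally positive if all its minors are nonnegative. -/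
def IsTotallyPositive {p r : ℕ} (M : Matrix (Fin p) (Fin r) ℝ) : Prop :=
  ∀ (k : ℕ) (f : Fin k → Fin p) (g : Fin k → Fin r),
    StrictMono f → StrictMono g → 0 ≤ (M.submatrix f g).det

/-- A system of functions is totally positive on `I` if all its collocation matrices at
increasing points of `I` are totally positive. -/
def IsTotallyPositiveSystem (I : Set ℝ) {n : ℕ} (φ : Fin n → ℝ → ℝ) : Prop :=
  ∀ (m : ℕ) (x : Fin (m + 1) → ℝ), StrictMono x → (∀ j, x j ∈ I) →
    IsTotallyPositive (Matrix.of fun i j => φ i (x j))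

/-- Number of sign changes between consecutive entries of a list. -/
noncomputable def signChanges : List ℝ → ℕ
  | [] => 0
  | [_] => 0
  | a :: b :: t => (if a * b < 0 then 1 else 0) + signChanges (b :: t)

/-- `S⁻(v)`: the number of strict sign changes of a finite real sequence, i.e. the number
of sign changes after deleting all zero entries. -/
noncomputable def strictSignChanges (v : List ℝ) : ℕ :=
  signChanges (v.filter fun x => x ≠ 0)

/-- Rational quantum trigonometric Bernstein basis function `R^n_k(x;q)` with weights `w`. -/
noncomputable def rqBern (q a b : ℝ) (n : ℕ) (w : Fin (n + 1) → ℝ) (k : Fin (n + 1)) (x : ℝ) : ℝ :=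
  w k * qBern q a b n k x / ∑ i : Fin (n + 1), w i * qBern q a b n i x

lemma qInt_pos {q : ℝ} (hq : 0 < q) (m : ℕ) : 0 < qInt q (m + 1) := by
  unfold qInt
  exact Finset.sum_pos (fun i _ => pow_pos hq i) (by simp)

lemma qFact_pos {q : ℝ} (hq : 0 < q) (m : ℕ) : 0 < qFact q m := by
  induction m with
  | zero => norm_num [qFact]
  | succ k ih => exact mul_pos (qInt_pos hq k) ih

lemma qInt_add (q : ℝ) (m l : ℕ) : qInt q (m + l) = qInt q m + q ^ m * qInt q l := by
  unfold qInt
  rw [Finset.sum_range_add, Finset.mul_sum]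
  congr 1
  exact Finset.sum_congr rfl fun i _ => pow_add q m i

lemma qBinom_zero (q : ℝ) (hq : 0 < q) (r : ℕ) : qBinom q r 0 = 1 := by
  unfold qBinom
  simp [qFact, div_self (ne_of_gt (qFact_pos hq r))]

lemma qBinom_self (q : ℝ) (hq : 0 < q) (r : ℕ) : qBinom q r r = 1 := by
  unfold qBinom
  simp [qFact, div_self, mul_comm, div_self (ne_of_gt (qFact_pos hq r))]

lemma qBinom_pascalB (q : ℝ) (hq : 0 < q) {r j : ℕ} (h : j < r) :
    qBinom q (r + 1) (j + 1) = qBinom q r (j + 1) + q ^ (r - j) * qBinom q r j := by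
  have h1 : r + 1 - (j + 1) = r - j := by omega
  have h2 : r - (j + 1) = r - j - 1 := by omega
  have h3 : r - j = (r - j - 1) + 1 := by omega
  have hr1 : qFact q (r + 1) = qInt q (r + 1) * qFact q r := rfl
  have hj1 : qFact q (j + 1) = qInt q (j + 1) * qFact q j := rfl
  have hrj : qFact q (r - j) = qInt q (r - j) * qFact q (r - j - 1) := by
    rw [h3]; rfl
  have hint : qInt q (r + 1) = qInt q (r - j) + q ^ (r - j) * qInt q (j + 1) := by
    rw [← qInt_add q (r - j) (j + 1), show r - j + (j + 1) = r + 1 from by omega]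
  unfold qBinom
  rw [h1, h2, hr1, hj1, hrj, hint]
  have f1 := ne_of_gt (qFact_pos hq r)
  have f2 := ne_of_gt (qFact_pos hq j)
  have f3 := ne_of_gt (qFact_pos hq (r - j - 1))
  have f4 := ne_of_gt (qInt_pos hq j)
  have f5 := ne_of_gt (qInt_pos hq (r - j - 1))
  rw [show qInt q (r - j) = qInt q ((r - j - 1) + 1) from by rw [← h3]]
  field_simp

lemma qBinom_pascalA (q : ℝ) (hq : 0 < q) {r j : ℕ} (h : j < r) :
    qBinom q (r + 1) (j + 1) = q ^ (j + 1) * qBinom q r (j + 1) + qBinom q r j := by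
  have h1 : r + 1 - (j + 1) = r - j := by omega
  have h2 : r - (j + 1) = r - j - 1 := by omega
  have h3 : r - j = (r - j - 1) + 1 := by omega
  have hr1 : qFact q (r + 1) = qInt q (r + 1) * qFact q r := rfl
  have hj1 : qFact q (j + 1) = qInt q (j + 1) * qFact q j := rfl
  have hrj : qFact q (r - j) = qInt q (r - j) * qFact q (r - j - 1) := by
    rw [h3]; rfl
  have hint : qInt q (r + 1) = qInt q (j + 1) + q ^ (j + 1) * qInt q (r - j) := by
    rw [← qInt_add q (j + 1) (r - j), show (j + 1) + (r - j) = r + 1 from by omega]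
  unfold qBinom
  rw [h1, h2, hr1, hj1, hrj, hint]
  have f1 := ne_of_gt (qFact_pos hq r)
  have f2 := ne_of_gt (qFact_pos hq j)
  have f3 := ne_of_gt (qFact_pos hq (r - j - 1))
  have f4 := ne_of_gt (qInt_pos hq j)
  have f5 := ne_of_gt (qInt_pos hq (r - j - 1))
  rw [show qInt q (r - j) = qInt q ((r - j - 1) + 1) from by rw [← h3]]
  field_simp
  ring

noncomputable def ctAux (q a b x : ℝ) (n r k j : ℕ) : ℝ :=
  q ^ (k * (r - j)) * qBinom q r j * (∏ i ∈ Finset.range j, dq a x (q ^ (k + i))) *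
    (∏ i ∈ Finset.range (r - j), dq x b (q ^ (n - r - k + i))) /
    ∏ i ∈ Finset.range r, dq a b (q ^ (n - r + i))

noncomputable def cbAux (q a b x : ℝ) (n r k j : ℕ) : ℝ :=
  q ^ ((n - r - k) * j) * qBinom q r j * (∏ i ∈ Finset.range j, dq a x (q ^ (k + i))) *
    (∏ i ∈ Finset.range (r - j), dq x b (q ^ (n - r - k + i))) /
    ∏ i ∈ Finset.range r, dq a b (q ^ (n - r + i))

lemma prod_split (f : ℕ → ℝ) {m a1 a2 : ℕ} (h : a1 + 1 = a2) :
    ∏ i ∈ Finset.range (m + 1), f (a1 + i) = f a1 * ∏ i ∈ Finset.range m, f (a2 + i) := by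
  rw [Finset.prod_range_succ', add_zero, mul_comm]
  congr 1
  exact Finset.prod_congr rfl fun i _ => by rw [show a1 + (i + 1) = a2 + i from by omega]

section
variable (q a b x : ℝ) (n r k j : ℕ)

lemma ct_step0 (hq : 0 < q) (hrk : k + r + 1 ≤ n)
    (hD0 : dq a b (q ^ (n - r - 1)) ≠ 0)
    (hPD : (∏ i ∈ Finset.range r, dq a b (q ^ (n - r + i))) ≠ 0) :
    ctAux q a b x n (r + 1) k 0 =
      (q ^ k * (dq x b (q ^ (n - r - k - 1)) / dq a b (q ^ (n - r - 1)))) *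
        ctAux q a b x n r k 0 := by
  simp only [ctAux, qBinom_zero q hq, Nat.sub_zero, Finset.range_zero, Finset.prod_empty]
  rw [prod_split (fun e => dq x b (q ^ e)) (a1 := n - (r + 1) - k) (a2 := n - r - k) (by omega),
    prod_split (fun e => dq a b (q ^ e)) (a1 := n - (r + 1)) (a2 := n - r) (by omega),
    show n - (r + 1) - k = n - r - k - 1 from by omega,
    show n - (r + 1) = n - r - 1 from by omega,
    show k * (r + 1) = k * r + k from by ring, pow_add, pow_mul]
  field_simp

lemma ct_stepTop (hq : 0 < q) (hrk : k + r + 1 ≤ n)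
    (hD0 : dq a b (q ^ (n - r - 1)) ≠ 0)
    (hPD : (∏ i ∈ Finset.range r, dq a b (q ^ (n - r + i))) ≠ 0) :
    ctAux q a b x n (r + 1) k (r + 1) =
      (dq a x (q ^ k) / dq a b (q ^ (n - r - 1))) * ctAux q a b x n r (k + 1) r := by
  simp only [ctAux, qBinom_self q hq, Nat.sub_self, Finset.range_zero, Finset.prod_empty,
    Nat.mul_zero, mul_zero, pow_zero]
  rw [prod_split (fun e => dq a x (q ^ e)) (a1 := k) (a2 := k + 1) rfl,
    prod_split (fun e => dq a b (q ^ e)) (a1 := n - (r + 1)) (a2 := n - r) (by omega),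
    show n - (r + 1) = n - r - 1 from by omega]
  field_simp

lemma ct_stepMid (hq : 0 < q) (hrk : k + r + 1 ≤ n) (hj : j < r)
    (hD0 : dq a b (q ^ (n - r - 1)) ≠ 0)
    (hPD : (∏ i ∈ Finset.range r, dq a b (q ^ (n - r + i))) ≠ 0) :
    ctAux q a b x n (r + 1) k (j + 1) =
      (q ^ k * (dq x b (q ^ (n - r - k - 1)) / dq a b (q ^ (n - r - 1)))) *
        ctAux q a b x n r k (j + 1) +
      (dq a x (q ^ k) / dq a b (q ^ (n - r - 1))) * ctAux q a b x n r (k + 1) j := by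
  obtain ⟨m, hm⟩ : ∃ m, r - j = m + 1 := ⟨r - j - 1, by omega⟩
  simp only [ctAux]
  rw [qBinom_pascalB q hq hj,
    show r + 1 - (j + 1) = m + 1 from by omega,
    show r - (j + 1) = m from by omega, hm,
    prod_split (fun e => dq a x (q ^ e)) (m := j) (a1 := k) (a2 := k + 1) rfl,
    prod_split (fun e => dq x b (q ^ e)) (m := m) (a1 := n - (r + 1) - k) (a2 := n - r - k)
      (by omega),
    prod_split (fun e => dq x b (q ^ e)) (m := m) (a1 := n - r - (k + 1)) (a2 := n - r - k)
      (by omega),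
    prod_split (fun e => dq a b (q ^ e)) (a1 := n - (r + 1)) (a2 := n - r) (by omega),
    show n - (r + 1) - k = n - r - k - 1 from by omega,
    show n - r - (k + 1) = n - r - k - 1 from by omega,
    show n - (r + 1) = n - r - 1 from by omega]
  field_simp
  ring

end

section
variable (q a b x : ℝ) (n r k j : ℕ)

lemma cb_step0 (hq : 0 < q) (hrk : k + r + 1 ≤ n)
    (hD0 : dq a b (q ^ (n - r - 1)) ≠ 0)
    (hPD : (∏ i ∈ Finset.range r, dq a b (q ^ (n - r + i))) ≠ 0) :
    cbAux q a b x n (r + 1) k 0 =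
      (dq x b (q ^ (n - r - k - 1)) / dq a b (q ^ (n - r - 1))) * cbAux q a b x n r k 0 := by
  simp only [cbAux, qBinom_zero q hq, Nat.sub_zero, Finset.range_zero, Finset.prod_empty,
    Nat.mul_zero, mul_zero, pow_zero]
  rw [prod_split (fun e => dq x b (q ^ e)) (a1 := n - (r + 1) - k) (a2 := n - r - k) (by omega),
    prod_split (fun e => dq a b (q ^ e)) (a1 := n - (r + 1)) (a2 := n - r) (by omega),
    show n - (r + 1) - k = n - r - k - 1 from by omega,
    show n - (r + 1) = n - r - 1 from by omega]
  field_simp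

lemma cb_stepTop (hq : 0 < q) (hrk : k + r + 1 ≤ n)
    (hD0 : dq a b (q ^ (n - r - 1)) ≠ 0)
    (hPD : (∏ i ∈ Finset.range r, dq a b (q ^ (n - r + i))) ≠ 0) :
    cbAux q a b x n (r + 1) k (r + 1) =
      (q ^ (n - r - k - 1) * (dq a x (q ^ k) / dq a b (q ^ (n - r - 1)))) *
        cbAux q a b x n r (k + 1) r := by
  simp only [cbAux, qBinom_self q hq, Nat.sub_self, Finset.range_zero, Finset.prod_empty]
  rw [show n - (r + 1) - k = n - r - k - 1 from by omega,
    show n - r - (k + 1) = n - r - k - 1 from by omega,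
    show (n - r - k - 1) * (r + 1) = (n - r - k - 1) * r + (n - r - k - 1) from Nat.mul_succ _ _,
    pow_add,
    prod_split (fun e => dq a x (q ^ e)) (a1 := k) (a2 := k + 1) rfl,
    prod_split (fun e => dq a b (q ^ e)) (a1 := n - (r + 1)) (a2 := n - r) (by omega),
    show n - (r + 1) = n - r - 1 from by omega]
  field_simp

lemma cb_stepMid (hq : 0 < q) (hrk : k + r + 1 ≤ n) (hj : j < r)
    (hD0 : dq a b (q ^ (n - r - 1)) ≠ 0)
    (hPD : (∏ i ∈ Finset.range r, dq a b (q ^ (n - r + i))) ≠ 0) :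
    cbAux q a b x n (r + 1) k (j + 1) =
      (dq x b (q ^ (n - r - k - 1)) / dq a b (q ^ (n - r - 1))) *
        cbAux q a b x n r k (j + 1) +
      (q ^ (n - r - k - 1) * (dq a x (q ^ k) / dq a b (q ^ (n - r - 1)))) *
        cbAux q a b x n r (k + 1) j := by
  obtain ⟨m, hm⟩ : ∃ m, r - j = m + 1 := ⟨r - j - 1, by omega⟩
  obtain ⟨s, hs⟩ : ∃ s, n - r - k - 1 = s := ⟨_, rfl⟩
  simp only [cbAux]
  rw [qBinom_pascalA q hq hj,
    show r + 1 - (j + 1) = m + 1 from by omega,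
    show r - (j + 1) = m from by omega, hm,
    show n - (r + 1) - k = s from by omega,
    show n - r - (k + 1) = s from by omega,
    show n - r - k - 1 = s from hs,
    show n - r - k = s + 1 from by omega,
    prod_split (fun e => dq a x (q ^ e)) (m := j) (a1 := k) (a2 := k + 1) rfl,
    prod_split (fun e => dq x b (q ^ e)) (m := m) (a1 := s) (a2 := s + 1) rfl,
    prod_split (fun e => dq a b (q ^ e)) (a1 := n - (r + 1)) (a2 := n - r) (by omega),
    show n - (r + 1) = n - r - 1 from by omega]
  field_simp
  ring
end

section
variable (q a b x : ℝ) (n j : ℕ)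

lemma ct_final (hq : 0 < q) : ctAux q a b x n n 0 j = qBern q a b n j x := by
  simp only [ctAux, qBern, Nat.sub_self, Nat.zero_sub, Nat.sub_zero, zero_add, Nat.zero_mul,
    Nat.mul_zero, pow_zero, one_mul]
  ring

lemma cb_final (hq : 0 < q) : cbAux q a b x n n 0 j = qBern q a b n j x := by
  simp only [cbAux, qBern, Nat.sub_self, Nat.zero_sub, Nat.sub_zero, zero_add, Nat.zero_mul,
    Nat.mul_zero, pow_zero, one_mul]
  ring

end

/-- Both de Casteljau type algorithms evaluate the quantum trigonometric Bézier curve: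
`b̃ⁿ₀(x) = b̄ⁿ₀(x) = P(x)`. -/
theorem deCasteljau_evaluates_curve (n d : ℕ) (q a b : ℝ) (hq : 0 < q) (hab : a < b)
    (hd : ∀ i < n, dq a b (q ^ i) ≠ 0)
    (bp : ℕ → Fin d → ℝ) (bt bbar : ℕ → ℕ → ℝ → Fin d → ℝ)
    (ht0 : ∀ k ≤ n, ∀ x : ℝ, bt 0 k x = bp k)
    (hb0 : ∀ k ≤ n, ∀ x : ℝ, bbar 0 k x = bp k)
    (htrec : ∀ r k, r < n → k ≤ n - r - 1 → ∀ x : ℝ,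
      bt (r + 1) k x =
        (q ^ k * (dq x b (q ^ (n - r - k - 1)) / dq a b (q ^ (n - r - 1)))) • bt r k x +
        (dq a x (q ^ k) / dq a b (q ^ (n - r - 1))) • bt r (k + 1) x)
    (hbrec : ∀ r k, r < n → k ≤ n - r - 1 → ∀ x : ℝ,
      bbar (r + 1) k x =
        (dq x b (q ^ (n - r - k - 1)) / dq a b (q ^ (n - r - 1))) • bbar r k x +
        (q ^ (n - r - k - 1) * (dq a x (q ^ k) / dq a b (q ^ (n - r - 1)))) •
          bbar r (k + 1) x) :
    ∀ x : ℝ,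
      bt n 0 x = ∑ k ∈ Finset.range (n + 1), qBern q a b n k x • bp k ∧
      bbar n 0 x = ∑ k ∈ Finset.range (n + 1), qBern q a b n k x • bp k := by

  have hD0 : ∀ r < n, dq a b (q ^ (n - r - 1)) ≠ 0 := fun r hr => hd _ (by omega)
  have hPD : ∀ r ≤ n, (∏ i ∈ Finset.range r, dq a b (q ^ (n - r + i))) ≠ 0 := by
    intro r hr
    rw [Finset.prod_ne_zero_iff]
    intro i hi
    exact hd _ (by simp only [Finset.mem_range] at hi; omega)
  have key : ∀ r, r ≤ n → ∀ k, k + r ≤ n → ∀ x,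
      bt r k x = ∑ j ∈ Finset.range (r + 1), ctAux q a b x n r k j • bp (k + j) ∧
      bbar r k x = ∑ j ∈ Finset.range (r + 1), cbAux q a b x n r k j • bp (k + j) := by
    intro r
    induction r with
    | zero =>
      intro _ k hk x
      constructor
      · rw [ht0 k (by omega) x, Finset.sum_range_one]
        simp [ctAux, qBinom, qFact]
      · rw [hb0 k (by omega) x, Finset.sum_range_one]
        simp [cbAux, qBinom, qFact]
    | succ r ih =>
      intro hr1 k hk x
      have hr : r < n := by omega
      have hrk : k + r + 1 ≤ n := by omega
      have hd0 := hD0 r hr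
      have hpd := hPD r (by omega)
      obtain ⟨ihk1, ihk2⟩ := ih (by omega) k (by omega) x
      obtain ⟨ihk1', ihk2'⟩ := ih (by omega) (k + 1) (by omega) x
      constructor
      · rw [htrec r k hr (by omega) x, ihk1, ihk1', Finset.smul_sum, Finset.smul_sum]
        rw [Finset.sum_range_succ' (fun j => ctAux q a b x n (r + 1) k j • bp (k + j)) (r + 1),
          Finset.sum_range_succ (fun j => ctAux q a b x n (r + 1) k (j + 1) • bp (k + (j + 1))) r,
          Finset.sum_range_succ'
            (fun j => (q ^ k * (dq x b (q ^ (n - r - k - 1)) / dq a b (q ^ (n - r - 1)))) •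
              (ctAux q a b x n r k j • bp (k + j))) r,
          Finset.sum_range_succ
            (fun j => (dq a x (q ^ k) / dq a b (q ^ (n - r - 1))) •
              (ctAux q a b x n r (k + 1) j • bp (k + 1 + j))) r]
        have h0 : (q ^ k * (dq x b (q ^ (n - r - k - 1)) / dq a b (q ^ (n - r - 1)))) •
              (ctAux q a b x n r k 0 • bp (k + 0)) =
            ctAux q a b x n (r + 1) k 0 • bp (k + 0) := by
          rw [smul_smul, ct_step0 q a b x n r k hq hrk hd0 hpd]
        have htop : (dq a x (q ^ k) / dq a b (q ^ (n - r - 1))) •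
              (ctAux q a b x n r (k + 1) r • bp (k + 1 + r)) =
            ctAux q a b x n (r + 1) k (r + 1) • bp (k + (r + 1)) := by
          rw [show k + 1 + r = k + (r + 1) from by omega, smul_smul,
            ct_stepTop q a b x n r k hq hrk hd0 hpd]
        have hmid : ∀ j ∈ Finset.range r,
            (q ^ k * (dq x b (q ^ (n - r - k - 1)) / dq a b (q ^ (n - r - 1)))) •
              (ctAux q a b x n r k (j + 1) • bp (k + (j + 1))) +
            (dq a x (q ^ k) / dq a b (q ^ (n - r - 1))) •
              (ctAux q a b x n r (k + 1) j • bp (k + 1 + j)) =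
            ctAux q a b x n (r + 1) k (j + 1) • bp (k + (j + 1)) := by
          intro j hj
          rw [Finset.mem_range] at hj
          rw [show k + 1 + j = k + (j + 1) from by omega, smul_smul, smul_smul, ← add_smul,
            ← ct_stepMid q a b x n r k j hq hrk hj hd0 hpd]
        calc (∑ j ∈ Finset.range r,
                (q ^ k * (dq x b (q ^ (n - r - k - 1)) / dq a b (q ^ (n - r - 1)))) •
                  (ctAux q a b x n r k (j + 1) • bp (k + (j + 1))) +
              (q ^ k * (dq x b (q ^ (n - r - k - 1)) / dq a b (q ^ (n - r - 1)))) •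
                (ctAux q a b x n r k 0 • bp (k + 0))) +
            (∑ j ∈ Finset.range r,
                (dq a x (q ^ k) / dq a b (q ^ (n - r - 1))) •
                  (ctAux q a b x n r (k + 1) j • bp (k + 1 + j)) +
              (dq a x (q ^ k) / dq a b (q ^ (n - r - 1))) •
                (ctAux q a b x n r (k + 1) r • bp (k + 1 + r)))
            = ((∑ j ∈ Finset.range r,
                ((q ^ k * (dq x b (q ^ (n - r - k - 1)) / dq a b (q ^ (n - r - 1)))) •
                  (ctAux q a b x n r k (j + 1) • bp (k + (j + 1))) +
                 (dq a x (q ^ k) / dq a b (q ^ (n - r - 1))) •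
                  (ctAux q a b x n r (k + 1) j • bp (k + 1 + j)))) +
               (dq a x (q ^ k) / dq a b (q ^ (n - r - 1))) •
                (ctAux q a b x n r (k + 1) r • bp (k + 1 + r))) +
              (q ^ k * (dq x b (q ^ (n - r - k - 1)) / dq a b (q ^ (n - r - 1)))) •
                (ctAux q a b x n r k 0 • bp (k + 0)) := by
                rw [Finset.sum_add_distrib]; abel
          _ = (∑ j ∈ Finset.range r, ctAux q a b x n (r + 1) k (j + 1) • bp (k + (j + 1)) +
                ctAux q a b x n (r + 1) k (r + 1) • bp (k + (r + 1))) +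
              ctAux q a b x n (r + 1) k 0 • bp (k + 0) := by
                rw [Finset.sum_congr rfl hmid, h0, htop]
      · rw [hbrec r k hr (by omega) x, ihk2, ihk2', Finset.smul_sum, Finset.smul_sum]
        rw [Finset.sum_range_succ' (fun j => cbAux q a b x n (r + 1) k j • bp (k + j)) (r + 1),
          Finset.sum_range_succ (fun j => cbAux q a b x n (r + 1) k (j + 1) • bp (k + (j + 1))) r,
          Finset.sum_range_succ'
            (fun j => (dq x b (q ^ (n - r - k - 1)) / dq a b (q ^ (n - r - 1))) •
              (cbAux q a b x n r k j • bp (k + j))) r,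
          Finset.sum_range_succ
            (fun j => (q ^ (n - r - k - 1) * (dq a x (q ^ k) / dq a b (q ^ (n - r - 1)))) •
              (cbAux q a b x n r (k + 1) j • bp (k + 1 + j))) r]
        have h0 : (dq x b (q ^ (n - r - k - 1)) / dq a b (q ^ (n - r - 1))) •
              (cbAux q a b x n r k 0 • bp (k + 0)) =
            cbAux q a b x n (r + 1) k 0 • bp (k + 0) := by
          rw [smul_smul, cb_step0 q a b x n r k hq hrk hd0 hpd]
        have htop : (q ^ (n - r - k - 1) * (dq a x (q ^ k) / dq a b (q ^ (n - r - 1)))) •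
              (cbAux q a b x n r (k + 1) r • bp (k + 1 + r)) =
            cbAux q a b x n (r + 1) k (r + 1) • bp (k + (r + 1)) := by
          rw [show k + 1 + r = k + (r + 1) from by omega, smul_smul,
            cb_stepTop q a b x n r k hq hrk hd0 hpd]
        have hmid : ∀ j ∈ Finset.range r,
            (dq x b (q ^ (n - r - k - 1)) / dq a b (q ^ (n - r - 1))) •
              (cbAux q a b x n r k (j + 1) • bp (k + (j + 1))) +
            (q ^ (n - r - k - 1) * (dq a x (q ^ k) / dq a b (q ^ (n - r - 1)))) •
              (cbAux q a b x n r (k + 1) j • bp (k + 1 + j)) =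
            cbAux q a b x n (r + 1) k (j + 1) • bp (k + (j + 1)) := by
          intro j hj
          rw [Finset.mem_range] at hj
          rw [show k + 1 + j = k + (j + 1) from by omega, smul_smul, smul_smul, ← add_smul,
            ← cb_stepMid q a b x n r k j hq hrk hj hd0 hpd]
        calc (∑ j ∈ Finset.range r,
                (dq x b (q ^ (n - r - k - 1)) / dq a b (q ^ (n - r - 1))) •
                  (cbAux q a b x n r k (j + 1) • bp (k + (j + 1))) +
              (dq x b (q ^ (n - r - k - 1)) / dq a b (q ^ (n - r - 1))) •
                (cbAux q a b x n r k 0 • bp (k + 0))) +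
            (∑ j ∈ Finset.range r,
                (q ^ (n - r - k - 1) * (dq a x (q ^ k) / dq a b (q ^ (n - r - 1)))) •
                  (cbAux q a b x n r (k + 1) j • bp (k + 1 + j)) +
              (q ^ (n - r - k - 1) * (dq a x (q ^ k) / dq a b (q ^ (n - r - 1)))) •
                (cbAux q a b x n r (k + 1) r • bp (k + 1 + r)))
            = ((∑ j ∈ Finset.range r,
                ((dq x b (q ^ (n - r - k - 1)) / dq a b (q ^ (n - r - 1))) •
                  (cbAux q a b x n r k (j + 1) • bp (k + (j + 1))) +
                 (q ^ (n - r - k - 1) * (dq a x (q ^ k) / dq a b (q ^ (n - r - 1)))) •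
                  (cbAux q a b x n r (k + 1) j • bp (k + 1 + j)))) +
               (q ^ (n - r - k - 1) * (dq a x (q ^ k) / dq a b (q ^ (n - r - 1)))) •
                (cbAux q a b x n r (k + 1) r • bp (k + 1 + r))) +
              (dq x b (q ^ (n - r - k - 1)) / dq a b (q ^ (n - r - 1))) •
                (cbAux q a b x n r k 0 • bp (k + 0)) := by
                rw [Finset.sum_add_distrib]; abel
          _ = (∑ j ∈ Finset.range r, cbAux q a b x n (r + 1) k (j + 1) • bp (k + (j + 1)) +
                cbAux q a b x n (r + 1) k (r + 1) • bp (k + (r + 1))) +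
              cbAux q a b x n (r + 1) k 0 • bp (k + 0) := by
                rw [Finset.sum_congr rfl hmid, h0, htop]
  intro x
  obtain ⟨h1, h2⟩ := key n le_rfl 0 (by omega) x
  constructor
  · rw [h1]
    exact Finset.sum_congr rfl fun j _ => by rw [zero_add, ct_final q a b x n j hq]
  · rw [h2]
    exact Finset.sum_congr rfl fun j _ => by rw [zero_add, cb_final q a b x n j hq]
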